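/- Davis–Kahan type bound for eigenvector perturbation: let C and C̃ = C + E be real symmetric n×n matrices with eigenvalues λ_1 ≥ … ≥ λ_n of C, and let u_k, ũ_k be unit eigenvectors of C and C̃ for the k-th eigenvalue. If min(λ_{k−1} − λ_k, λ_k − λ_{k+1}) > 0, then sin∠(u_k, ũ_k) ≤ 2‖E‖_op / min(λ_{k−1} − λ_k, λ_k − λ_{k+1}), where sin∠(u, v) = √(1 − ⟨u,v⟩²). -/

import Mathlib

/-! Expand everything in an orthonormal eigenbasis `b` of `C`. The gap makes `λ_k` a simple
eigenvalue, so `u = ±b_k` and `1 - ⟪u, v⟫² = ∑_{i ≠ k} ⟪b_i, v⟫²`, while `(C - λ_k) v` has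
coefficients `(λ_i - λ_k) ⟪b_i, v⟫` with `|λ_i - λ_k| ≥ δ` for `i ≠ k`; hence
`δ² (1 - ⟪u, v⟫²) ≤ ‖(C - λ_k) v‖²`. On the other hand `(C - λ_k) v = (μ_k - λ_k) v - E v`, and
Weyl's inequality `|μ_k - λ_k| ≤ ‖E‖` bounds its norm by `2 ‖E‖`. -/

open Matrix Finset Module Submodule
open scoped RealInnerProductSpace

namespace OrthonormalBasis

section Diagonal

variable {ι E : Type*} [Fintype ι] [NormedAddCommGroup E] [InnerProductSpace ℝ E]
  (b : OrthonormalBasis ι ℝ E) {T : E →L[ℝ] E} {lam : ι → ℝ}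

theorem inner_apply_of_apply_eq_smul (hT : ∀ i, T (b i) = lam i • b i) (x : E) (i : ι) :
    ⟪b i, T x⟫ = lam i * ⟪b i, x⟫ := by
  conv_lhs => rw [← b.sum_repr' x]
  simp_rw [map_sum, map_smul, hT, smul_smul]
  rw [b.orthonormal.inner_right_fintype, mul_comm]

theorem inner_apply_self_eq_sum (hT : ∀ i, T (b i) = lam i • b i) (x : E) :
    ⟪T x, x⟫ = ∑ i, lam i * ⟪b i, x⟫ ^ 2 := by
  rw [← b.sum_inner_mul_inner]
  refine Finset.sum_congr rfl fun i _ => ?_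
  rw [real_inner_comm, b.inner_apply_of_apply_eq_smul hT]
  ring

theorem norm_apply_sub_smul_sq_eq_sum (hT : ∀ i, T (b i) = lam i • b i) (c : ℝ) (x : E) :
    ‖T x - c • x‖ ^ 2 = ∑ i, (lam i - c) ^ 2 * ⟪b i, x⟫ ^ 2 := by
  rw [← b.sum_sq_inner_right]
  refine Finset.sum_congr rfl fun i _ => ?_
  rw [inner_sub_right, inner_smul_right, b.inner_apply_of_apply_eq_smul hT]
  ring

theorem inner_eq_zero_of_apply_eq_smul (hT : ∀ i, T (b i) = lam i • b i) {x : E} {μ : ℝ}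
    (hx : T x = μ • x) {i : ι} (hi : lam i ≠ μ) : ⟪b i, x⟫ = 0 := by
  have h := b.inner_apply_of_apply_eq_smul hT x i
  rw [hx, inner_smul_right] at h
  have : (lam i - μ) * ⟪b i, x⟫ = 0 := by linarith
  exact (mul_eq_zero.mp this).resolve_left (sub_ne_zero.mpr hi)

theorem inner_eq_zero_of_mem_span_image {s : Set ι} {x : E} (hx : x ∈ span ℝ (b '' s))
    {i : ι} (hi : i ∉ s) : ⟪b i, x⟫ = 0 := by
  obtain ⟨l, hl, rfl⟩ := Finsupp.mem_span_image_iff_linearCombination ℝ |>.mp hx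
  rw [real_inner_comm]
  exact b.orthonormal.inner_finsupp_eq_zero hi hl

theorem finrank_span_image (s : Finset ι) : finrank ℝ (span ℝ (b '' s)) = s.card := by
  classical
  have hb := b.orthonormal.linearIndependent
  rw [← Finset.coe_image,
    finrank_span_finset_eq_card (by simpa using (hb.linearIndepOn _).id_image),
    Finset.card_image_of_injective _ hb.injective]

theorem le_rayleighQuotient_of_mem_span (hT : ∀ i, T (b i) = lam i • b i) {s : Set ι} {c : ℝ}
    (hc : ∀ i ∈ s, c ≤ lam i) {x : E} (hx : x ∈ span ℝ (b '' s)) (hx0 : x ≠ 0) :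
    c ≤ T.rayleighQuotient x := by
  rw [ContinuousLinearMap.rayleighQuotient, ContinuousLinearMap.reApplyInnerSelf_apply,
    RCLike.re_to_real, le_div_iff₀ (by positivity), ← b.sum_sq_inner_right,
    b.inner_apply_self_eq_sum hT, Finset.mul_sum]
  refine Finset.sum_le_sum fun i _ => ?_
  by_cases hi : i ∈ s
  · exact mul_le_mul_of_nonneg_right (hc i hi) (sq_nonneg _)
  · simp [b.inner_eq_zero_of_mem_span_image hx hi]

theorem rayleighQuotient_le_of_mem_span (hT : ∀ i, T (b i) = lam i • b i) {s : Set ι} {c : ℝ}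
    (hc : ∀ i ∈ s, lam i ≤ c) {x : E} (hx : x ∈ span ℝ (b '' s)) (hx0 : x ≠ 0) :
    T.rayleighQuotient x ≤ c := by
  have h := b.le_rayleighQuotient_of_mem_span (T := -T) (lam := -lam) (by simp [hT])
    (fun i hi => neg_le_neg (hc i hi)) hx hx0
  rw [ContinuousLinearMap.rayleighQuotient_neg_apply] at h
  linarith

theorem one_sub_inner_sq_eq_sum_erase [DecidableEq ι] {k : ι} {u v : E} (hu : ‖u‖ = 1)
    (hv : ‖v‖ = 1) (hu_perp : ∀ i ≠ k, ⟪b i, u⟫ = 0) :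
    1 - ⟪u, v⟫ ^ 2 = ∑ i ∈ univ.erase k, ⟪b i, v⟫ ^ 2 := by
  have huk : ⟪b k, u⟫ ^ 2 = 1 := by
    rw [← one_pow 2, ← hu, ← b.sum_sq_inner_right,
      Finset.sum_eq_single k (fun i _ hi => by simp [hu_perp i hi]) (by simp)]
  have huv : ⟪u, v⟫ = ⟪b k, u⟫ * ⟪b k, v⟫ := by
    rw [← b.sum_inner_mul_inner, real_inner_comm u, Finset.sum_eq_single k
      (fun i _ hi => by rw [real_inner_comm, hu_perp i hi, zero_mul]) (by simp)]
  rw [← one_pow 2, ← hv, ← b.sum_sq_inner_right, ← Finset.add_sum_erase _ _ (Finset.mem_univ k),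
    huv, mul_pow, huk]
  ring

theorem sq_mul_one_sub_inner_sq_le (hT : ∀ i, T (b i) = lam i • b i) {k : ι} {δ : ℝ} (hδ : 0 < δ)
    (hgap : ∀ i ≠ k, δ ≤ |lam i - lam k|) {u v : E} (hu : T u = lam k • u) (hu1 : ‖u‖ = 1)
    (hv1 : ‖v‖ = 1) : δ ^ 2 * (1 - ⟪u, v⟫ ^ 2) ≤ ‖T v - lam k • v‖ ^ 2 := by
  classical
  have hu_perp : ∀ i ≠ k, ⟪b i, u⟫ = 0 := fun i hi =>
    b.inner_eq_zero_of_apply_eq_smul hT hu fun h => by simpa [h] using hδ.trans_le (hgap i hi)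
  rw [b.one_sub_inner_sq_eq_sum_erase hu1 hv1 hu_perp, b.norm_apply_sub_smul_sq_eq_sum hT,
    Finset.mul_sum]
  calc ∑ i ∈ univ.erase k, δ ^ 2 * ⟪b i, v⟫ ^ 2
      ≤ ∑ i ∈ univ.erase k, (lam i - lam k) ^ 2 * ⟪b i, v⟫ ^ 2 := by
        refine Finset.sum_le_sum fun i hi => mul_le_mul_of_nonneg_right ?_ (sq_nonneg _)
        simpa [sq_abs] using pow_le_pow_left₀ hδ.le (hgap i (Finset.ne_of_mem_erase hi)) 2
    _ ≤ ∑ i, (lam i - lam k) ^ 2 * ⟪b i, v⟫ ^ 2 :=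
        Finset.sum_le_sum_of_subset_of_nonneg (Finset.subset_univ _) fun i _ _ => by positivity

end Diagonal

section Weyl

variable {E : Type*} [NormedAddCommGroup E] [InnerProductSpace ℝ E] {n : ℕ}
  {T S : E →L[ℝ] E} {lam mu : Fin n → ℝ}

/-- The spans of the `B i` with `i ≤ k` and of the `D i` with `i ≥ k` have dimensions adding up to
`n + 1`, so they share a nonzero vector, whose Rayleigh quotients compare `lam k` with `mu k`. -/
theorem eigenvalue_le_add_norm_sub (B D : OrthonormalBasis (Fin n) ℝ E) (hlam : Antitone lam)
    (hmu : Antitone mu) (hT : ∀ i, T (B i) = lam i • B i) (hS : ∀ i, S (D i) = mu i • D i)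
    (k : Fin n) : lam k ≤ mu k + ‖T - S‖ := by
  have := Module.Finite.of_basis B.toBasis
  obtain ⟨x, hxB, hxD, hx0⟩ :
      ∃ x ∈ span ℝ (B '' ↑(Iic k)), x ∈ span ℝ (D '' ↑(Ici k)) ∧ x ≠ 0 := by
    have hdim : ¬ finrank ℝ (span ℝ (B '' ↑(Iic k))) + finrank ℝ (span ℝ (D '' ↑(Ici k))) ≤
        finrank ℝ E := by
      rw [B.finrank_span_image, D.finrank_span_image, finrank_eq_card_basis B.toBasis]
      simp only [Fin.card_Iic, Fin.card_Ici, Fintype.card_fin]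
      omega
    simpa [Submodule.disjoint_def] using mt finrank_add_finrank_le_of_disjoint hdim
  calc lam k ≤ T.rayleighQuotient x :=
        B.le_rayleighQuotient_of_mem_span hT (fun i hi => hlam (by simpa using hi)) hxB hx0
    _ = S.rayleighQuotient x + (T - S).rayleighQuotient x := by
        rw [← ContinuousLinearMap.rayleighQuotient_add, add_sub_cancel]
    _ ≤ mu k + ‖T - S‖ := add_le_add
        (D.rayleighQuotient_le_of_mem_span hS (fun i hi => hmu (by simpa using hi)) hxD hx0)
        ((le_abs_self _).trans ((T - S).rayleighQuotient_le_norm x))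

theorem abs_eigenvalue_sub_le_norm_sub (B D : OrthonormalBasis (Fin n) ℝ E) (hlam : Antitone lam)
    (hmu : Antitone mu) (hT : ∀ i, T (B i) = lam i • B i) (hS : ∀ i, S (D i) = mu i • D i)
    (k : Fin n) : |lam k - mu k| ≤ ‖T - S‖ := by
  have h₁ := eigenvalue_le_add_norm_sub B D hlam hmu hT hS k
  have h₂ := eigenvalue_le_add_norm_sub D B hmu hlam hS hT k
  rw [norm_sub_rev] at h₂
  exact abs_sub_le_iff.mpr ⟨by linarith, by linarith⟩

end Weyl

end OrthonormalBasis

theorem Antitone.le_abs_sub_of_adjacent_gaps {n : ℕ} {lam : Fin n → ℝ} (hlam : Antitone lam)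
    {k : Fin n} {δ : ℝ} (hprev : ∀ j : Fin n, (j : ℕ) + 1 = k → δ ≤ lam j - lam k)
    (hnext : ∀ j : Fin n, (k : ℕ) + 1 = j → δ ≤ lam k - lam j) {i : Fin n} (hi : i ≠ k) :
    δ ≤ |lam i - lam k| := by
  rcases hi.lt_or_gt with hik | hki
  · have hj : (k : ℕ) - 1 < n := by omega
    have hgap := hprev ⟨k - 1, hj⟩ (show (k : ℕ) - 1 + 1 = k by omega)
    have hmono := hlam (show i ≤ ⟨k - 1, hj⟩ from Fin.le_def.mpr (by dsimp only; omega))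
    exact le_abs.mpr (Or.inl (by linarith))
  · have hj : (k : ℕ) + 1 < n := by omega
    have hgap := hnext ⟨k + 1, hj⟩ rfl
    have hmono := hlam (show (⟨k + 1, hj⟩ : Fin n) ≤ i from Fin.le_def.mpr (by dsimp only; omega))
    exact le_abs.mpr (Or.inr (by linarith))

theorem OrthonormalBasis.sqrt_one_sub_inner_sq_le {E : Type*} [NormedAddCommGroup E]
    [InnerProductSpace ℝ E] {n : ℕ} (B D : OrthonormalBasis (Fin n) ℝ E) {T F : E →L[ℝ] E}
    {lam mu : Fin n → ℝ} (hlam : Antitone lam) (hmu : Antitone mu)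
    (hT : ∀ i, T (B i) = lam i • B i) (hTF : ∀ i, (T + F) (D i) = mu i • D i) {k : Fin n}
    {δ : ℝ} (hδ : 0 < δ) (hgap : ∀ i ≠ k, δ ≤ |lam i - lam k|) {u v : E}
    (hu : T u = lam k • u) (hv : (T + F) v = mu k • v) (hu1 : ‖u‖ = 1) (hv1 : ‖v‖ = 1) :
    √(1 - ⟪u, v⟫ ^ 2) ≤ 2 * ‖F‖ / δ := by
  have hweyl : |mu k - lam k| ≤ ‖F‖ := by
    simpa using abs_eigenvalue_sub_le_norm_sub D B hmu hlam hTF hT k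
  have hresidual : ‖T v - lam k • v‖ ≤ 2 * ‖F‖ := by
    have hTv : T v - lam k • v = (mu k - lam k) • v - F v := by
      rw [sub_smul, ← hv, _root_.add_apply]
      abel
    calc ‖T v - lam k • v‖ ≤ |mu k - lam k| * ‖v‖ + ‖F‖ * ‖v‖ := by
          rw [hTv, ← Real.norm_eq_abs, ← norm_smul]
          exact (norm_sub_le _ _).trans (add_le_add le_rfl (F.le_opNorm v))
      _ ≤ 2 * ‖F‖ := by rw [hv1]; linarith
  rw [Real.sqrt_le_left (by positivity), div_pow, le_div_iff₀ (by positivity), mul_comm]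
  calc δ ^ 2 * (1 - ⟪u, v⟫ ^ 2) ≤ ‖T v - lam k • v‖ ^ 2 :=
        B.sq_mul_one_sub_inner_sq_le hT hδ hgap hu hu1 hv1
    _ ≤ (2 * ‖F‖) ^ 2 := pow_le_pow_left₀ (norm_nonneg _) hresidual 2

theorem Matrix.IsHermitian.exists_orthonormalBasis_toEuclideanCLM_apply {ι : Type*} [Fintype ι]
    [DecidableEq ι] {A : Matrix ι ι ℝ} (hA : A.IsHermitian) {lam : ι → ℝ}
    (hlam : ∃ σ : Equiv.Perm ι, lam = hA.eigenvalues ∘ σ) :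
    ∃ B : OrthonormalBasis ι ℝ (EuclideanSpace ℝ ι),
      ∀ i, toEuclideanCLM (𝕜 := ℝ) A (B i) = lam i • B i := by
  obtain ⟨σ, rfl⟩ := hlam
  refine ⟨hA.eigenvectorBasis.reindex σ.symm, fun i => ?_⟩
  rw [OrthonormalBasis.reindex_apply, Equiv.symm_symm]
  exact congrArg (WithLp.toLp 2) (hA.mulVec_eigenvectorBasis (σ i))

theorem EuclideanSpace.norm_toLp_eq_one {ι : Type*} [Fintype ι] {u : ι → ℝ}
    (hu : ∑ i, u i ^ 2 = 1) : ‖WithLp.toLp 2 u‖ = 1 := by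
  simp [EuclideanSpace.norm_eq, hu]

/-- Davis–Kahan `sin Θ` bound (Yu–Wang–Samworth variant): for real symmetric
`C` and `C̃ = C + E` with descending eigenvalue lists `lam` and `mu`, and unit
eigenvectors `u`, `v` for the `k`-th eigenvalue of `C` resp. `C̃`, if `δ > 0`
lower-bounds `min(λ_{k-1} - λ_k, λ_k - λ_{k+1})` (missing neighbors count as
`±∞`, so the corresponding condition is vacuous), then
`sin∠(u, v) = √(1 - ⟨u,v⟩²) ≤ 2‖E‖_op / δ`. -/
theorem davis_kahan_sin_theta
    {n : ℕ} (C E : Matrix (Fin n) (Fin n) ℝ)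
    (hC : C.IsHermitian) (hCE : (C + E).IsHermitian)
    (lam mu : Fin n → ℝ)
    (hlam_anti : Antitone lam) (hmu_anti : Antitone mu)
    (hlam : ∃ σ : Equiv.Perm (Fin n), lam = hC.eigenvalues ∘ σ)
    (hmu : ∃ σ : Equiv.Perm (Fin n), mu = hCE.eigenvalues ∘ σ)
    (k : Fin n) (u v : Fin n → ℝ)
    (hu : C.mulVec u = lam k • u) (hv : (C + E).mulVec v = mu k • v)
    (hu1 : ∑ i, u i ^ 2 = 1) (hv1 : ∑ i, v i ^ 2 = 1)
    (δ : ℝ) (hδ : 0 < δ)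
    (hgap_prev : ∀ j : Fin n, (j : ℕ) + 1 = (k : ℕ) → δ ≤ lam j - lam k)
    (hgap_next : ∀ j : Fin n, (k : ℕ) + 1 = (j : ℕ) → δ ≤ lam k - lam j) :
    Real.sqrt (1 - (∑ i, u i * v i) ^ 2) ≤
      2 * ‖Matrix.toEuclideanCLM (𝕜 := ℝ) E‖ / δ := by
  obtain ⟨B, hB⟩ := hC.exists_orthonormalBasis_toEuclideanCLM_apply hlam
  obtain ⟨D, hD⟩ := hCE.exists_orthonormalBasis_toEuclideanCLM_apply hmu
  rw [map_add] at hD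
  have key := B.sqrt_one_sub_inner_sq_le D hlam_anti hmu_anti hB hD hδ
    (fun i hi => hlam_anti.le_abs_sub_of_adjacent_gaps hgap_prev hgap_next hi)
    (u := WithLp.toLp 2 u) (v := WithLp.toLp 2 v) (congrArg (WithLp.toLp 2) hu)
    (by rw [← map_add]; exact congrArg (WithLp.toLp 2) hv)
    (EuclideanSpace.norm_toLp_eq_one hu1) (EuclideanSpace.norm_toLp_eq_one hv1)
  simpa [EuclideanSpace.inner_toLp_toLp, dotProduct, mul_comm] using key
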